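/- With m: GL2 → GL7 the Levi embedding and n(a1,a2,a3,a4,t) ∈ GL7 the explicit unipotent matrices realizing N inside SO(3,4), the adjoint action formula holds: m·n₁(a, z)·m⁻¹ = n₁(det(m)⁻¹ρ3(m)a, det(m)·z), where n₁(a,z) = n(a1,a2,a3,a4, z/2 - (a1a4/2 - 3a2a3/2)) are the modified Heisenberg coordinates, ρ3 is the symmetric-cube action on binary cubic coefficients, over any ℚ-algebra R and m ∈ GL2(R). -/

import Mathlib

open Matrix

/-- The explicit 7×7 unipotent matrices n(a1,a2,a3,a4,t) of the Heisenberg radical. -/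
def nMat {R : Type*} [CommRing R] (a1 a2 a3 a4 t : R) : Matrix (Fin 7) (Fin 7) R :=
  !![1, 0, -a3, 2*a2, -a1, a2^2 - a1*a3, 2*a2*a3 - a1*a4 - t;
     0, 1, -a4, 2*a3, -a2, -(a2*a3) + t, a3^2 - a2*a4;
     0, 0, 1, 0, 0, a1, a2;
     0, 0, 0, 1, 0, a2, a3;
     0, 0, 0, 0, 1, a3, a4;
     0, 0, 0, 0, 0, 1, 0;
     0, 0, 0, 0, 0, 0, 1]

/-- The modified Heisenberg coordinates: n1(a, z) = n(a, z/2 - (a1a4/2 - 3a2a3/2)),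
over a ℚ-algebra R. -/
noncomputable def n1Mat {R : Type*} [CommRing R] [Algebra ℚ R]
    (a1 a2 a3 a4 z : R) : Matrix (Fin 7) (Fin 7) R :=
  nMat a1 a2 a3 a4 ((z - a1*a4 + 3*a2*a3) * algebraMap ℚ R (1/2))

/-- The explicit 7×7 Levi embedding m((a b; c d)), with e playing the role of
1/(ad-bc). -/
def mMat {R : Type*} [CommRing R] (a b c d e : R) : Matrix (Fin 7) (Fin 7) R :=
  !![d, c, 0, 0, 0, 0, 0;
     b, a, 0, 0, 0, 0, 0;
     0, 0, d^2*e, 2*c*d*e, c^2*e, 0, 0;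
     0, 0, b*d*e, (a*d + b*c)*e, a*c*e, 0, 0;
     0, 0, b^2*e, 2*a*b*e, a^2*e, 0, 0;
     0, 0, 0, 0, 0, a*e, -(b*e);
     0, 0, 0, 0, 0, -(c*e), d*e]

/-- The symmetric-cube action of (a b; c d) on binary cubic coefficient quadruples. -/
def rho3 {R : Type*} [CommRing R] (a b c d : R) (x : R × R × R × R) : R × R × R × R :=
  match x with
  | (w1, w2, w3, w4) =>
    (w1*d^3 + 3*w2*d^2*c + 3*w3*d*c^2 + w4*c^3,
     w1*d^2*b + w2*(2*d*b*c + d^2*a) + w3*(b*c^2 + 2*d*c*a) + w4*c^2*a,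
     w1*d*b^2 + w2*(b^2*c + 2*d*b*a) + w3*(2*b*c*a + d*a^2) + w4*c*a^2,
     w1*b^3 + 3*w2*b^2*a + 3*w3*b*a^2 + w4*a^3)

/-! `mMat (d*e) (-(b*e)) (-(c*e)) (a*e) (a*d - b*c)` is the inverse of `m = mMat a b c d e`, so the
adjoint formula amounts to the intertwining relation `m * n₁(w, z) = n₁(e ρ₃(w), Δ z) * m`. Entrywise
this is a polynomial identity modulo `Δ e = 1` and `2 · ½ = 1`. The shift of the central coordinate
by `(w₁w₄ - 3w₂w₃)/2` in `n₁` is what makes that coordinate transform by the character `Δ` alone. -/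

theorem mMat_mul_mMat_inv {R : Type*} [CommRing R] {a b c d e : R} (h : (a*d - b*c) * e = 1) :
    mMat a b c d e * mMat (d*e) (-(b*e)) (-(c*e)) (a*e) (a*d - b*c) = 1 := by
  ext i j
  fin_cases i <;> fin_cases j <;> simp [mul_apply, Fin.sum_univ_succ, mMat] <;> grind

set_option maxHeartbeats 1000000 in
theorem mMat_mul_n1Mat {R : Type*} [CommRing R] [Algebra ℚ R] {a b c d e : R}
    (h : (a*d - b*c) * e = 1) (w1 w2 w3 w4 z : R) :
    mMat a b c d e * n1Mat w1 w2 w3 w4 z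
      = n1Mat (e * (rho3 a b c d (w1, w2, w3, w4)).1)
          (e * (rho3 a b c d (w1, w2, w3, w4)).2.1)
          (e * (rho3 a b c d (w1, w2, w3, w4)).2.2.1)
          (e * (rho3 a b c d (w1, w2, w3, w4)).2.2.2)
          ((a*d - b*c) * z) * mMat a b c d e := by
  have half_mul_two : algebraMap ℚ R (1/2) * 2 = 1 := by
    rw [← map_ofNat (algebraMap ℚ R) 2, ← map_mul]; norm_num
  simp only [n1Mat, rho3]
  generalize algebraMap ℚ R (1/2) = half at half_mul_two ⊢
  ext i j
  fin_cases i <;> fin_cases j <;> simp [mul_apply, Fin.sum_univ_succ, mMat, nMat] <;> grind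

/-- The adjoint action formula: m·n1(a, z)·m⁻¹ = n1(det(m)⁻¹ρ3(m)a, det(m)·z),
where m = (a b; c d) ∈ GL2(R), e = det(m)⁻¹ (so m⁻¹ = e·(d -b; -c a) with det
inverse ad-bc), over any ℚ-algebra R. -/
theorem stmt16 {R : Type*} [CommRing R] [Algebra ℚ R] (a b c d e : R)
    (hΔ : (a*d - b*c) * e = 1) (w1 w2 w3 w4 z : R) :
    mMat a b c d e * n1Mat w1 w2 w3 w4 z * mMat (d*e) (-(b*e)) (-(c*e)) (a*e) (a*d - b*c)
      = n1Mat (e * (rho3 a b c d (w1, w2, w3, w4)).1)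
          (e * (rho3 a b c d (w1, w2, w3, w4)).2.1)
          (e * (rho3 a b c d (w1, w2, w3, w4)).2.2.1)
          (e * (rho3 a b c d (w1, w2, w3, w4)).2.2.2)
          ((a*d - b*c) * z) := by
  rw [mMat_mul_n1Mat hΔ, mul_assoc, mMat_mul_mMat_inv hΔ, mul_one]
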